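/- arXiv:2603.21514 — 4 statements merged into one kernel-verified Lean document; each statement's English description precedes it below -/
import Mathlib

section
/- For all indices i ≠ j and every point (δ, V) ∈ ℝ^N × ℝ^N, the following mixed second-order partial derivatives of the active power all equal ∂Q_i/∂δ_j: − V_i V_j · ∂²P_i/∂V_i∂V_j = − ∂²P_i/∂δ_i∂δ_j = V_i · ∂²Q_i/∂V_i∂δ_j = − V_j · ∂²Q_i/∂V_j∂δ_i = ∂Q_i/∂δ_j, all evaluated at (δ, V). -/
/-!
Each quantity in the theorem has the form `x ↦ ∑ k, m k x.2 * φ k (x.1 i - x.1 k)`: an angle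
partial `∂/∂δ_j` only differentiates the branch functions `φ k`, picking up the chain factor
`e_j i - e_j k`, while a magnitude partial `∂/∂V_j` only differentiates the polynomial weights
`m k`. For `i ≠ j` only the branch `k = j` survives, and the identities then come down to the
branch functions of `P_i` and `Q_i` being quarter rotations of each other under `d/dθ`.
-/

/-- Active power injection `P_i(δ, V)`. -/
noncomputable def Pinj (N : ℕ) (G B : Fin N → Fin N → ℝ) (i : Fin N) :
    (Fin N → ℝ) × (Fin N → ℝ) → ℝ :=
  fun x => x.2 i * ∑ j, x.2 j *
    (G i j * Real.cos (x.1 i - x.1 j) + B i j * Real.sin (x.1 i - x.1 j))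

/-- Reactive power injection `Q_i(δ, V)`. -/
noncomputable def Qinj (N : ℕ) (G B : Fin N → Fin N → ℝ) (i : Fin N) :
    (Fin N → ℝ) × (Fin N → ℝ) → ℝ :=
  fun x => x.2 i * ∑ j, x.2 j *
    (G i j * Real.sin (x.1 i - x.1 j) - B i j * Real.cos (x.1 i - x.1 j))

/-- Partial derivative with respect to the angle `δ_j`. -/
noncomputable def pdA (N : ℕ) (j : Fin N) (f : (Fin N → ℝ) × (Fin N → ℝ) → ℝ) :
    (Fin N → ℝ) × (Fin N → ℝ) → ℝ :=
  fun x => fderiv ℝ f x (Pi.single j 1, 0)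

/-- Partial derivative with respect to the voltage magnitude `V_j`. -/
noncomputable def pdM (N : ℕ) (j : Fin N) (f : (Fin N → ℝ) × (Fin N → ℝ) → ℝ) :
    (Fin N → ℝ) × (Fin N → ℝ) → ℝ :=
  fun x => fderiv ℝ f x (0, Pi.single j 1)

theorem hasLineDerivAt_apply {ι : Type*} (k : ι) (V w : ι → ℝ) :
    HasLineDerivAt ℝ (fun V : ι → ℝ => V k) (w k) V w := by
  unfold HasLineDerivAt
  simpa using ((hasDerivAt_id (0 : ℝ)).mul_const (w k)).const_add (V k)

theorem hasLineDerivAt_apply_mul_apply {ι : Type*} (k l : ι) (V w : ι → ℝ) :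
    HasLineDerivAt ℝ (fun V : ι → ℝ => V k * V l) (w k * V l + V k * w l) V w :=
  ((hasLineDerivAt_apply k V w).fun_mul (hasLineDerivAt_apply l V w)).congr_deriv (by simp)

theorem hasLineDerivAt_polar {ι : Type*} (k l : ι) (u V w : ι → ℝ) :
    HasLineDerivAt ℝ (fun V : ι → ℝ => u k * V l + V k * u l) (u k * w l + w k * u l) V w :=
  ((hasLineDerivAt_apply l V w).const_mul (u k)).fun_add
    ((hasLineDerivAt_apply k V w).mul_const (u l))

section AngleSum

variable {ι : Type*} [Fintype ι]

def angleSum (i : ι) (m : ι → (ι → ℝ) → ℝ) (φ : ι → ℝ → ℝ) (x : (ι → ℝ) × (ι → ℝ)) : ℝ :=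
  ∑ k, m k x.2 * φ k (x.1 i - x.1 k)

theorem differentiable_angleSum (i : ι) {m : ι → (ι → ℝ) → ℝ} {φ : ι → ℝ → ℝ}
    (hm : ∀ k, Differentiable ℝ (m k)) (hφ : ∀ k, Differentiable ℝ (φ k)) :
    Differentiable ℝ (angleSum i m φ) := by
  unfold angleSum
  fun_prop

theorem hasLineDerivAt_angleSum (i : ι) {m : ι → (ι → ℝ) → ℝ} {m' : ι → ℝ}
    {φ φ' : ι → ℝ → ℝ} {x v : (ι → ℝ) × (ι → ℝ)}
    (hm : ∀ k, HasLineDerivAt ℝ (m k) (m' k) x.2 v.2)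
    (hφ : ∀ k θ, HasDerivAt (φ k) (φ' k θ) θ) :
    HasLineDerivAt ℝ (angleSum i m φ)
      (∑ k, (m' k * φ k (x.1 i - x.1 k) +
        m k x.2 * ((v.1 i - v.1 k) * φ' k (x.1 i - x.1 k)))) x v := by
  refine HasDerivAt.fun_sum fun k _ => ?_
  have hline : HasDerivAt (fun t : ℝ => (x + t • v).1 i - (x + t • v).1 k)
      (v.1 i - v.1 k) 0 := by
    simpa using (((hasDerivAt_id (0 : ℝ)).mul_const (v.1 i)).const_add (x.1 i)).fun_sub
      (((hasDerivAt_id (0 : ℝ)).mul_const (v.1 k)).const_add (x.1 k))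
  have hangle := (hφ k (x.1 i - x.1 k)).comp_of_eq 0 hline (by simp)
  refine ((hm k).fun_mul hangle).congr_deriv ?_
  simp only [zero_smul, add_zero, Function.comp_apply, Prod.fst_add, Prod.smul_fst, Pi.add_apply,
    Pi.smul_apply, smul_eq_mul, zero_mul]
  ring

end AngleSum

section PowerFlow

variable {ι : Type*} (G B : ι → ι → ℝ) (i k : ι)

noncomputable def activeBranch (θ : ℝ) : ℝ := G i k * Real.cos θ + B i k * Real.sin θ

noncomputable def reactiveBranch (θ : ℝ) : ℝ := G i k * Real.sin θ - B i k * Real.cos θ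

theorem hasDerivAt_activeBranch (θ : ℝ) :
    HasDerivAt (activeBranch G B i k) (-reactiveBranch G B i k θ) θ := by
  unfold activeBranch reactiveBranch
  exact (((Real.hasDerivAt_cos θ).const_mul (G i k)).fun_add
    ((Real.hasDerivAt_sin θ).const_mul (B i k))).congr_deriv (by ring)

theorem hasDerivAt_reactiveBranch (θ : ℝ) :
    HasDerivAt (reactiveBranch G B i k) (activeBranch G B i k θ) θ := by
  unfold activeBranch reactiveBranch
  exact (((Real.hasDerivAt_sin θ).const_mul (G i k)).fun_sub
    ((Real.hasDerivAt_cos θ).const_mul (B i k))).congr_deriv (by ring)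

end PowerFlow

section PowerInjections

variable {N : ℕ}

theorem pdA_angleSum (i j : Fin N) {m : Fin N → (Fin N → ℝ) → ℝ} {φ φ' : Fin N → ℝ → ℝ}
    (hm : ∀ k, Differentiable ℝ (m k)) (hφ : ∀ k θ, HasDerivAt (φ k) (φ' k θ) θ) :
    pdA N j (angleSum i m φ) =
      angleSum i m fun k θ =>
        ((Pi.single j 1 : Fin N → ℝ) i - (Pi.single j 1 : Fin N → ℝ) k) * φ' k θ := by
  funext x
  have hf := differentiable_angleSum i hm fun k θ => (hφ k θ).differentiableAt
  have h := hasLineDerivAt_angleSum i (x := x) (m := m) (v := (Pi.single j 1, 0)) (m' := 0)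
    (fun k => hasLineDerivAt_zero) hφ
  rw [pdA, ← (hf x).lineDeriv_eq_fderiv, h.lineDeriv]
  simp [angleSum]

theorem pdM_angleSum (i j : Fin N) {m m' : Fin N → (Fin N → ℝ) → ℝ} {φ : Fin N → ℝ → ℝ}
    (hm : ∀ k, Differentiable ℝ (m k))
    (hm' : ∀ k V, HasLineDerivAt ℝ (m k) (m' k V) V (Pi.single j 1))
    (hφ : ∀ k, Differentiable ℝ (φ k)) :
    pdM N j (angleSum i m φ) = angleSum i m' φ := by
  funext x
  have hf := differentiable_angleSum i hm hφ
  have h := hasLineDerivAt_angleSum i (x := x) (v := (0, Pi.single j 1))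
    (φ' := fun k => deriv (φ k)) (fun k => hm' k x.2) fun k θ => (hφ k θ).hasDerivAt
  rw [pdM, ← (hf x).lineDeriv_eq_fderiv, h.lineDeriv]
  simp [angleSum]

variable (G B : Fin N → Fin N → ℝ) (i : Fin N)

theorem Pinj_eq_angleSum :
    Pinj N G B i = angleSum i (fun k V => V i * V k) (activeBranch G B i) := by
  funext x
  simp [Pinj, angleSum, activeBranch, Finset.mul_sum, mul_assoc]

theorem Qinj_eq_angleSum :
    Qinj N G B i = angleSum i (fun k V => V i * V k) (reactiveBranch G B i) := by
  funext x
  simp [Qinj, angleSum, reactiveBranch, Finset.mul_sum, mul_assoc]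

variable {G B i} {j : Fin N}

theorem pdA_Qinj_of_ne (hij : i ≠ j) (x : (Fin N → ℝ) × (Fin N → ℝ)) :
    pdA N j (Qinj N G B i) x = -(x.2 i * x.2 j) * activeBranch G B i j (x.1 i - x.1 j) := by
  rw [Qinj_eq_angleSum, pdA_angleSum i j (fun k => by fun_prop) (hasDerivAt_reactiveBranch G B i)]
  simp [angleSum, Pi.single_apply, hij]

theorem pdM_pdM_Pinj_of_ne (hij : i ≠ j) (x : (Fin N → ℝ) × (Fin N → ℝ)) :
    pdM N i (pdM N j (Pinj N G B i)) x = activeBranch G B i j (x.1 i - x.1 j) := by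
  have hφ : ∀ k, Differentiable ℝ (activeBranch G B i k) := fun k θ =>
    (hasDerivAt_activeBranch G B i k θ).differentiableAt
  rw [Pinj_eq_angleSum, pdM_angleSum i j (fun k => by fun_prop)
      (fun k V => hasLineDerivAt_apply_mul_apply i k V _) hφ,
    pdM_angleSum i i (fun k => by fun_prop)
      (fun k V => hasLineDerivAt_polar i k _ V _) hφ]
  simp [angleSum, Pi.single_apply, hij]

theorem pdA_pdA_Pinj_of_ne (hij : i ≠ j) (x : (Fin N → ℝ) × (Fin N → ℝ)) :
    pdA N i (pdA N j (Pinj N G B i)) x =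
      x.2 i * x.2 j * activeBranch G B i j (x.1 i - x.1 j) := by
  rw [Pinj_eq_angleSum, pdA_angleSum i j (fun k => by fun_prop) (hasDerivAt_activeBranch G B i),
    pdA_angleSum i i (fun k => by fun_prop)
      (fun k θ => (hasDerivAt_reactiveBranch G B i k θ).fun_neg.const_mul _)]
  simp [angleSum, Pi.single_apply, hij, hij.symm]

theorem pdM_pdA_Qinj_of_ne (hij : i ≠ j) (x : (Fin N → ℝ) × (Fin N → ℝ)) :
    pdM N i (pdA N j (Qinj N G B i)) x = -x.2 j * activeBranch G B i j (x.1 i - x.1 j) := by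
  rw [Qinj_eq_angleSum, pdA_angleSum i j (fun k => by fun_prop) (hasDerivAt_reactiveBranch G B i),
    pdM_angleSum i i (fun k => by fun_prop) (fun k V => hasLineDerivAt_apply_mul_apply i k V _)
      (fun k θ => ((hasDerivAt_activeBranch G B i k θ).const_mul _).differentiableAt)]
  simp [angleSum, Pi.single_apply, hij, hij.symm]

theorem pdM_pdA_self_Qinj_of_ne (hij : i ≠ j) (x : (Fin N → ℝ) × (Fin N → ℝ)) :
    pdM N j (pdA N i (Qinj N G B i)) x = x.2 i * activeBranch G B i j (x.1 i - x.1 j) := by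
  rw [Qinj_eq_angleSum, pdA_angleSum i i (fun k => by fun_prop) (hasDerivAt_reactiveBranch G B i),
    pdM_angleSum i j (fun k => by fun_prop) (fun k V => hasLineDerivAt_apply_mul_apply i k V _)
      (fun k θ => ((hasDerivAt_activeBranch G B i k θ).const_mul _).differentiableAt)]
  simp [angleSum, Pi.single_apply, hij, hij.symm]

end PowerInjections

theorem stmt8_general (N : ℕ) (G B : Fin N → Fin N → ℝ)
    (i j : Fin N) (hij : i ≠ j) (δ V : Fin N → ℝ) :
    -(V i * V j) * pdM N i (pdM N j (Pinj N G B i)) (δ, V) =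
        pdA N j (Qinj N G B i) (δ, V) ∧
    -(pdA N i (pdA N j (Pinj N G B i)) (δ, V)) = pdA N j (Qinj N G B i) (δ, V) ∧
    V i * pdM N i (pdA N j (Qinj N G B i)) (δ, V) = pdA N j (Qinj N G B i) (δ, V) ∧
    -(V j) * pdM N j (pdA N i (Qinj N G B i)) (δ, V) =
        pdA N j (Qinj N G B i) (δ, V) := by
  refine ⟨?_, ?_, ?_, ?_⟩
  · rw [pdM_pdM_Pinj_of_ne hij, pdA_Qinj_of_ne hij]
  · rw [pdA_pdA_Pinj_of_ne hij, pdA_Qinj_of_ne hij]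
    ring
  · rw [pdM_pdA_Qinj_of_ne hij, pdA_Qinj_of_ne hij]
    ring
  · rw [pdM_pdA_self_Qinj_of_ne hij, pdA_Qinj_of_ne hij]
    ring

/-- For `i ≠ j`, the mixed second-order partial derivatives of the active power all
equal `∂Q_i/∂δ_j`:
`−V_i V_j ∂²P_i/∂V_i∂V_j = −∂²P_i/∂δ_i∂δ_j = V_i ∂²Q_i/∂V_i∂δ_j = −V_j ∂²Q_i/∂V_j∂δ_i
 = ∂Q_i/∂δ_j`. -/
theorem stmt8 (N : ℕ) (hN : 1 ≤ N) (G B : Fin N → Fin N → ℝ)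
    (i j : Fin N) (hij : i ≠ j) (δ V : Fin N → ℝ) :
    -(V i * V j) * pdM N i (pdM N j (Pinj N G B i)) (δ, V) =
        pdA N j (Qinj N G B i) (δ, V) ∧
    -(pdA N i (pdA N j (Pinj N G B i)) (δ, V)) = pdA N j (Qinj N G B i) (δ, V) ∧
    V i * pdM N i (pdA N j (Qinj N G B i)) (δ, V) = pdA N j (Qinj N G B i) (δ, V) ∧
    -(V j) * pdM N j (pdA N i (Qinj N G B i)) (δ, V) =
        pdA N j (Qinj N G B i) (δ, V) :=
  stmt8_general N G B i j hij δ V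
end

section
/- For all indices i ≠ j and every point (δ, V) ∈ ℝ^N × ℝ^N, the following mixed second-order partial derivatives of the reactive power all equal ∂P_i/∂δ_j: V_i V_j · ∂²Q_i/∂V_i∂V_j = ∂²Q_i/∂δ_i∂δ_j = V_i · ∂²P_i/∂V_i∂δ_j = − V_j · ∂²P_i/∂V_j∂δ_i = ∂P_i/∂δ_j, all evaluated at (δ, V). -/
/-!
Both injections are sums over `k` of terms `V_i V_k h_k(δ_i − δ_k)`, with `h_k` a combination of
`cos` and `sin`. Differentiating such a term in `δ_j` multiplies it by `[j = i] − [j = k]` and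
replaces `h_k` by `h_k'`; differentiating in `V_j` only touches the weight `V_i V_k`. For `j ≠ i`
only the term `k = j` survives a single differentiation, and since
`(G sin − B cos)' = G cos + B sin` and `(G cos + B sin)' = −(G sin − B cos)`, all five quantities
reduce to `V_i V_j (G_ij sin(δ_i − δ_j) − B_ij cos(δ_i − δ_j))`.
-/

namespace PowerFlow

variable {N : ℕ}

noncomputable def angleTerm (w : (Fin N → ℝ) → ℝ) (i k : Fin N) (h : ℝ → ℝ) :
    (Fin N → ℝ) × (Fin N → ℝ) → ℝ :=
  fun x => w x.2 * h (x.1 i - x.1 k)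

noncomputable def flowSum (i : Fin N) (f : Fin N → ℝ → ℝ) :
    (Fin N → ℝ) × (Fin N → ℝ) → ℝ :=
  fun x => x.2 i * ∑ k, x.2 k * f k (x.1 i - x.1 k)

noncomputable def angleDiff (i k : Fin N) : (Fin N → ℝ) × (Fin N → ℝ) →L[ℝ] ℝ :=
  (ContinuousLinearMap.proj i).comp (ContinuousLinearMap.fst ℝ (Fin N → ℝ) (Fin N → ℝ)) -
    (ContinuousLinearMap.proj k).comp (ContinuousLinearMap.fst ℝ (Fin N → ℝ) (Fin N → ℝ))

@[simp]
theorem angleDiff_apply (i k : Fin N) (v : (Fin N → ℝ) × (Fin N → ℝ)) :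
    angleDiff i k v = v.1 i - v.1 k :=
  rfl

section angleTerm

variable {w : (Fin N → ℝ) → ℝ} {w' : (Fin N → ℝ) →L[ℝ] ℝ} {i k : Fin N} {h : ℝ → ℝ} {h' : ℝ}
  {x : (Fin N → ℝ) × (Fin N → ℝ)}

theorem hasFDerivAt_angleTerm (hw : HasFDerivAt w w' x.2) (hh : HasDerivAt h h' (x.1 i - x.1 k)) :
    HasFDerivAt (angleTerm w i k h)
      (w x.2 • h' • angleDiff i k + h (x.1 i - x.1 k) • w'.comp (ContinuousLinearMap.snd ℝ _ _))
      x :=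
  (hw.comp x hasFDerivAt_snd).mul
    (hh.comp_hasFDerivAt (f := angleDiff i k) x (angleDiff i k).hasFDerivAt)

theorem pdA_angleTerm (j : Fin N) (hw : HasFDerivAt w w' x.2)
    (hh : HasDerivAt h h' (x.1 i - x.1 k)) :
    pdA N j (angleTerm w i k h) x =
      ((Pi.single j 1 : Fin N → ℝ) i - (Pi.single j 1 : Fin N → ℝ) k) * w x.2 * h' := by
  simp [pdA, (hasFDerivAt_angleTerm hw hh).fderiv, angleDiff]
  ring

theorem pdM_angleTerm (j : Fin N) (hw : HasFDerivAt w w' x.2)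
    (hh : DifferentiableAt ℝ h (x.1 i - x.1 k)) :
    pdM N j (angleTerm w i k h) x = w' (Pi.single j 1) * h (x.1 i - x.1 k) := by
  simp [pdM, (hasFDerivAt_angleTerm hw hh.hasDerivAt).fderiv]
  ring

end angleTerm

theorem hasFDerivAt_apply_mul_apply (i k : Fin N) (V : Fin N → ℝ) :
    HasFDerivAt (fun V : Fin N → ℝ => V i * V k)
      (V i • ContinuousLinearMap.proj (R := ℝ) k + V k • ContinuousLinearMap.proj i) V :=
  (hasFDerivAt_apply i V).mul (hasFDerivAt_apply k V)

section flowSum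

variable {i : Fin N} {f : Fin N → ℝ → ℝ} {x : (Fin N → ℝ) × (Fin N → ℝ)}

theorem flowSum_eq_sum_angleTerm (i : Fin N) (f : Fin N → ℝ → ℝ) :
    flowSum i f = fun x => ∑ k, angleTerm (fun V => V i * V k) i k (f k) x := by
  funext x
  simp only [flowSum, angleTerm, Finset.mul_sum, mul_assoc]

theorem pdA_flowSum (j : Fin N) {f' : Fin N → ℝ}
    (hf : ∀ k, HasDerivAt (f k) (f' k) (x.1 i - x.1 k)) :
    pdA N j (flowSum i f) x =
      ∑ k, ((Pi.single j 1 : Fin N → ℝ) i - (Pi.single j 1 : Fin N → ℝ) k) *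
        (x.2 i * x.2 k) * f' k := by
  have hd k := hasFDerivAt_angleTerm (hasFDerivAt_apply_mul_apply i k x.2) (hf k)
  simp only [pdA, flowSum_eq_sum_angleTerm,
    fderiv_fun_sum fun k _ => (hd k).differentiableAt, sum_apply]
  exact Finset.sum_congr rfl fun k _ =>
    pdA_angleTerm j (hasFDerivAt_apply_mul_apply i k x.2) (hf k)

theorem pdM_flowSum (j : Fin N) (hf : ∀ k, DifferentiableAt ℝ (f k) (x.1 i - x.1 k)) :
    pdM N j (flowSum i f) x =
      ∑ k, (x.2 i * (Pi.single j 1 : Fin N → ℝ) k + x.2 k * (Pi.single j 1 : Fin N → ℝ) i) *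
        f k (x.1 i - x.1 k) := by
  have hd k := hasFDerivAt_angleTerm (hasFDerivAt_apply_mul_apply i k x.2) (hf k).hasDerivAt
  simp only [pdM, flowSum_eq_sum_angleTerm,
    fderiv_fun_sum fun k _ => (hd k).differentiableAt, sum_apply]
  refine Finset.sum_congr rfl fun k _ => ?_
  rw [← pdM, pdM_angleTerm j (hasFDerivAt_apply_mul_apply i k x.2) (hf k)]
  simp

theorem pdA_flowSum_of_ne {j : Fin N} (hij : i ≠ j) {f' : Fin N → ℝ → ℝ}
    (hf : ∀ k s, HasDerivAt (f k) (f' k s) s) :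
    pdA N j (flowSum i f) = angleTerm (fun V => V i * V j) i j (fun s => -f' j s) := by
  funext x
  rw [pdA_flowSum j fun k => hf k _, Finset.sum_eq_single j]
  · simp [angleTerm, hij]
  · intro k _ hkj
    simp [hij, hkj]
  · simp

theorem pdM_flowSum_of_ne {j : Fin N} (hij : i ≠ j) (hf : ∀ k, Differentiable ℝ (f k)) :
    pdM N j (flowSum i f) = angleTerm (fun V => V i) i j (f j) := by
  funext x
  rw [pdM_flowSum j fun k => hf k _, Finset.sum_eq_single j]
  · simp [angleTerm, hij]
  · intro k _ hkj
    simp [hij, hkj]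
  · simp

theorem pdA_flowSum_self {f' : Fin N → ℝ → ℝ} (hf : ∀ k s, HasDerivAt (f k) (f' k s) s) :
    pdA N i (flowSum i f) = flowSum i (Function.update f' i 0) := by
  funext x
  rw [pdA_flowSum i fun k => hf k _, flowSum, Finset.mul_sum]
  refine Finset.sum_congr rfl fun k _ => ?_
  rcases eq_or_ne k i with rfl | hki
  · simp
  · simp [hki]
    ring

end flowSum

theorem hasDerivAt_mul_cos_add_mul_sin (a b s : ℝ) :
    HasDerivAt (fun s => a * Real.cos s + b * Real.sin s)
      (-(a * Real.sin s - b * Real.cos s)) s :=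
  (((Real.hasDerivAt_cos s).const_mul a).add
    ((Real.hasDerivAt_sin s).const_mul b)).congr_deriv (by ring)

theorem hasDerivAt_mul_sin_sub_mul_cos (a b s : ℝ) :
    HasDerivAt (fun s => a * Real.sin s - b * Real.cos s) (a * Real.cos s + b * Real.sin s) s :=
  (((Real.hasDerivAt_sin s).const_mul a).sub
    ((Real.hasDerivAt_cos s).const_mul b)).congr_deriv (by ring)

end PowerFlow

open PowerFlow

theorem stmt9_general (N : ℕ) (G B : Fin N → Fin N → ℝ)
    (i j : Fin N) (hij : i ≠ j) (δ V : Fin N → ℝ) :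
    V i * V j * pdM N i (pdM N j (Qinj N G B i)) (δ, V) =
        pdA N j (Pinj N G B i) (δ, V) ∧
    pdA N i (pdA N j (Qinj N G B i)) (δ, V) = pdA N j (Pinj N G B i) (δ, V) ∧
    V i * pdM N i (pdA N j (Pinj N G B i)) (δ, V) = pdA N j (Pinj N G B i) (δ, V) ∧
    -(V j) * pdM N j (pdA N i (Pinj N G B i)) (δ, V) =
        pdA N j (Pinj N G B i) (δ, V) := by
  have hP k s := hasDerivAt_mul_cos_add_mul_sin (G i k) (B i k) s
  have hQ k s := hasDerivAt_mul_sin_sub_mul_cos (G i k) (B i k) s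
  have hPinj : Pinj N G B i = flowSum i fun k s => G i k * Real.cos s + B i k * Real.sin s := rfl
  have hQinj : Qinj N G B i = flowSum i fun k s => G i k * Real.sin s - B i k * Real.cos s := rfl
  have hVi := hasFDerivAt_apply (𝕜 := ℝ) i V
  have hViVj := hasFDerivAt_apply_mul_apply i j V
  rw [hPinj, hQinj, pdA_flowSum_of_ne hij hP, pdA_flowSum_of_ne hij hQ, pdA_flowSum_self hP,
    pdM_flowSum_of_ne hij fun k s => (hQ k s).differentiableAt]
  refine ⟨?_, ?_, ?_, ?_⟩
  · rw [pdM_angleTerm i hVi (hQ j _).differentiableAt]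
    simp [angleTerm]
  · rw [pdA_angleTerm i hViVj (hP j _).fun_neg]
    simp [angleTerm, hij]
  · rw [pdM_angleTerm i hViVj ((hQ j _).fun_neg.fun_neg).differentiableAt]
    simp [angleTerm, hij]
    ring
  · have hdiff k : Differentiable ℝ (Function.update
        (fun k s => -(G i k * Real.sin s - B i k * Real.cos s)) i 0 k) := by
      rcases eq_or_ne k i with rfl | hki
      · simp
      · simp [hki]
    rw [pdM_flowSum_of_ne hij hdiff]
    simp [angleTerm, hij.symm]
    ring

/-- For `i ≠ j`, the mixed second-order partial derivatives of the reactive power all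
equal `∂P_i/∂δ_j`:
`V_i V_j ∂²Q_i/∂V_i∂V_j = ∂²Q_i/∂δ_i∂δ_j = V_i ∂²P_i/∂V_i∂δ_j = −V_j ∂²P_i/∂V_j∂δ_i
 = ∂P_i/∂δ_j`. -/
theorem stmt9 (N : ℕ) (hN : 1 ≤ N) (G B : Fin N → Fin N → ℝ)
    (i j : Fin N) (hij : i ≠ j) (δ V : Fin N → ℝ) :
    V i * V j * pdM N i (pdM N j (Qinj N G B i)) (δ, V) =
        pdA N j (Pinj N G B i) (δ, V) ∧
    pdA N i (pdA N j (Qinj N G B i)) (δ, V) = pdA N j (Pinj N G B i) (δ, V) ∧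
    V i * pdM N i (pdA N j (Pinj N G B i)) (δ, V) = pdA N j (Pinj N G B i) (δ, V) ∧
    -(V j) * pdM N j (pdA N i (Pinj N G B i)) (δ, V) =
        pdA N j (Pinj N G B i) (δ, V) :=
  stmt9_general N G B i j hij δ V
end

section
/- For every index i and every point (δ, V) ∈ ℝ^N × ℝ^N, the diagonal second-order partial derivatives of the active power satisfy: P_i(δ,V) − (V_i²/2) · ∂²P_i/∂V_i² (δ,V) = − ∂²P_i/∂δ_i² (δ,V) = V_i · ∂²Q_i/∂V_i∂δ_i (δ,V) = ∂Q_i/∂δ_i (δ,V). -/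
open Finset Function

variable {N : ℕ}

noncomputable def busInjection (i : Fin N) (φ : Fin N → ℝ → ℝ) :
    (Fin N → ℝ) × (Fin N → ℝ) → ℝ :=
  fun x => x.2 i * ∑ j, x.2 j * φ j (x.1 i - x.1 j)

noncomputable def angleCoord (k : Fin N) : ((Fin N → ℝ) × (Fin N → ℝ)) →L[ℝ] ℝ :=
  (ContinuousLinearMap.proj k).comp (ContinuousLinearMap.fst ℝ (Fin N → ℝ) (Fin N → ℝ))

noncomputable def magnitudeCoord (k : Fin N) : ((Fin N → ℝ) × (Fin N → ℝ)) →L[ℝ] ℝ :=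
  (ContinuousLinearMap.proj k).comp (ContinuousLinearMap.snd ℝ (Fin N → ℝ) (Fin N → ℝ))

@[simp] lemma angleCoord_apply (k : Fin N) (v : (Fin N → ℝ) × (Fin N → ℝ)) :
    angleCoord k v = v.1 k := rfl

@[simp] lemma magnitudeCoord_apply (k : Fin N) (v : (Fin N → ℝ) × (Fin N → ℝ)) :
    magnitudeCoord k v = v.2 k := rfl

lemma busInjection_update_zero (i : Fin N) (φ : Fin N → ℝ → ℝ) (x : (Fin N → ℝ) × (Fin N → ℝ)) :
    busInjection i (update φ i 0) x = busInjection i φ x - x.2 i ^ 2 * φ i 0 := by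
  have hterm : ∀ j, x.2 j * update φ i 0 j (x.1 i - x.1 j) =
      x.2 j * φ j (x.1 i - x.1 j) - if j = i then x.2 i * φ i 0 else 0 := by
    intro j
    rcases eq_or_ne j i with rfl | hj <;> simp [*]
  simp only [busInjection, hterm, sum_sub_distrib, sum_ite_eq', mem_univ, if_true]
  ring

lemma busInjection_neg (i : Fin N) (φ : Fin N → ℝ → ℝ) :
    busInjection i (-φ) = -busInjection i φ := by
  ext x
  simp [busInjection, sum_neg_distrib]

lemma hasDerivAt_update_zero {i : Fin N} {φ φ' : Fin N → ℝ → ℝ}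
    (hφ : ∀ j s, HasDerivAt (φ j) (φ' j s) s) (j : Fin N) (s : ℝ) :
    HasDerivAt (update φ i 0 j) (update φ' i 0 j s) s := by
  rcases eq_or_ne j i with rfl | hj
  · simp
  · simpa [hj] using hφ j s

section Derivatives

variable (i : Fin N) {φ φ' : Fin N → ℝ → ℝ} (hφ : ∀ j s, HasDerivAt (φ j) (φ' j s) s)
include hφ

lemma hasFDerivAt_sum_mul_comp_sub (x : (Fin N → ℝ) × (Fin N → ℝ)) :
    HasFDerivAt (fun x : (Fin N → ℝ) × (Fin N → ℝ) => ∑ j, x.2 j * φ j (x.1 i - x.1 j))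
      (∑ j, (x.2 j • φ' j (x.1 i - x.1 j) • (angleCoord i - angleCoord j)
        + φ j (x.1 i - x.1 j) • magnitudeCoord j)) x :=
  HasFDerivAt.fun_sum fun j _ => (magnitudeCoord j).hasFDerivAt.mul <|
    (hφ j _).comp_hasFDerivAt x ((angleCoord i).hasFDerivAt.sub (angleCoord j).hasFDerivAt)

lemma hasFDerivAt_busInjection (x : (Fin N → ℝ) × (Fin N → ℝ)) :
    HasFDerivAt (busInjection i φ)
      (x.2 i • ∑ j, (x.2 j • φ' j (x.1 i - x.1 j) • (angleCoord i - angleCoord j)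
          + φ j (x.1 i - x.1 j) • magnitudeCoord j)
        + (∑ j, x.2 j * φ j (x.1 i - x.1 j)) • magnitudeCoord i) x :=
  (magnitudeCoord i).hasFDerivAt.fun_mul (hasFDerivAt_sum_mul_comp_sub i hφ x)

lemma pdA_busInjection : pdA N i (busInjection i φ) = busInjection i (update φ' i 0) := by
  ext x
  rw [pdA, (hasFDerivAt_busInjection i hφ x).fderiv]
  simp only [busInjection, add_apply, smul_apply, _root_.sum_apply, sub_apply, angleCoord_apply,
    magnitudeCoord_apply, Pi.single_eq_same, Pi.zero_apply, smul_eq_mul, mul_zero, add_zero]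
  congr 1
  refine sum_congr rfl fun j _ => ?_
  rcases eq_or_ne j i with rfl | hj <;> simp [*]

lemma pdM_busInjection :
    pdM N i (busInjection i φ) = fun x => x.2 i * φ i 0 + ∑ j, x.2 j * φ j (x.1 i - x.1 j) := by
  ext x
  rw [pdM, (hasFDerivAt_busInjection i hφ x).fderiv]
  simp [Pi.single_apply]

lemma pdM_pdM_busInjection (x : (Fin N → ℝ) × (Fin N → ℝ)) :
    pdM N i (pdM N i (busInjection i φ)) x = 2 * φ i 0 := by
  have hderiv := ((magnitudeCoord i).hasFDerivAt.mul_const (φ i 0)).fun_add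
    (hasFDerivAt_sum_mul_comp_sub i hφ x)
  simp only [magnitudeCoord_apply] at hderiv
  rw [pdM_busInjection i hφ, pdM, hderiv.fderiv]
  simp only [add_apply, smul_apply, _root_.sum_apply, sub_apply, angleCoord_apply,
    magnitudeCoord_apply, Pi.single_apply, Pi.zero_apply, smul_eq_mul, sub_self, mul_zero, mul_one,
    mul_ite, zero_add, sum_ite_eq', mem_univ, if_true]
  ring

lemma mul_pdM_busInjection (δ V : Fin N → ℝ) :
    V i * pdM N i (busInjection i φ) (δ, V) = busInjection i φ (δ, V) + V i ^ 2 * φ i 0 := by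
  rw [pdM_busInjection i hφ, busInjection]
  ring

end Derivatives

theorem stmt10_general (N : ℕ) (G B : Fin N → Fin N → ℝ)
    (i : Fin N) (δ V : Fin N → ℝ) :
    Pinj N G B i (δ, V) - (V i ^ 2 / 2) * pdM N i (pdM N i (Pinj N G B i)) (δ, V) =
        pdA N i (Qinj N G B i) (δ, V) ∧
    -(pdA N i (pdA N i (Pinj N G B i)) (δ, V)) = pdA N i (Qinj N G B i) (δ, V) ∧
    V i * pdM N i (pdA N i (Qinj N G B i)) (δ, V) = pdA N i (Qinj N G B i) (δ, V) := by
  set φP : Fin N → ℝ → ℝ := fun j s => G i j * Real.cos s + B i j * Real.sin s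
  set φQ : Fin N → ℝ → ℝ := fun j s => G i j * Real.sin s - B i j * Real.cos s
  have hP : Pinj N G B i = busInjection i φP := rfl
  have hQ : Qinj N G B i = busInjection i φQ := rfl
  have hφQ : ∀ j s, HasDerivAt (φQ j) (φP j s) s := fun j s =>
    (((Real.hasDerivAt_sin s).const_mul (G i j)).fun_sub
      ((Real.hasDerivAt_cos s).const_mul (B i j))).congr_deriv (by simp only [φP]; ring)
  have hφP : ∀ j s, HasDerivAt (φP j) ((-φQ) j s) s := fun j s =>
    (((Real.hasDerivAt_cos s).const_mul (G i j)).fun_add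
      ((Real.hasDerivAt_sin s).const_mul (B i j))).congr_deriv (by simp only [φQ, Pi.neg_apply]; ring)
  have hφQ_neg : ∀ j s, HasDerivAt ((-φQ) j) ((-φP) j s) s := fun j s => (hφQ j s).neg
  have hpdAQ : pdA N i (Qinj N G B i) = busInjection i (update φP i 0) := by
    rw [hQ, pdA_busInjection i hφQ]
  have hpdAAP : pdA N i (pdA N i (Pinj N G B i)) = busInjection i (update (-φP) i 0) := by
    rw [hP, pdA_busInjection i hφP, pdA_busInjection i (hasDerivAt_update_zero hφQ_neg),
      update_idem]
  refine ⟨?_, ?_, ?_⟩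
  · rw [hP, pdM_pdM_busInjection i hφP, hpdAQ, busInjection_update_zero]
    ring
  · rw [hpdAAP, hpdAQ, busInjection_update_zero, busInjection_update_zero, busInjection_neg]
    simp only [Pi.neg_apply]
    ring
  · rw [hpdAQ, mul_pdM_busInjection i (hasDerivAt_update_zero hφP), update_self]
    simp

/-- Diagonal second-order partial derivatives of the active power:
`P_i − (V_i²/2) ∂²P_i/∂V_i² = −∂²P_i/∂δ_i² = V_i ∂²Q_i/∂V_i∂δ_i = ∂Q_i/∂δ_i`. -/
theorem stmt10 (N : ℕ) (hN : 1 ≤ N) (G B : Fin N → Fin N → ℝ)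
    (i : Fin N) (δ V : Fin N → ℝ) :
    Pinj N G B i (δ, V) - (V i ^ 2 / 2) * pdM N i (pdM N i (Pinj N G B i)) (δ, V) =
        pdA N i (Qinj N G B i) (δ, V) ∧
    -(pdA N i (pdA N i (Pinj N G B i)) (δ, V)) = pdA N i (Qinj N G B i) (δ, V) ∧
    V i * pdM N i (pdA N i (Qinj N G B i)) (δ, V) = pdA N i (Qinj N G B i) (δ, V) :=
  stmt10_general N G B i δ V
end

section
/- For every index i and every point (δ, V) ∈ ℝ^N × ℝ^N, the diagonal second-order partial derivatives of the reactive power satisfy: (V_i²/2) · ∂²Q_i/∂V_i² (δ,V) − Q_i(δ,V) = ∂²Q_i/∂δ_i² (δ,V) = V_i · ∂²P_i/∂V_i∂δ_i (δ,V) = ∂P_i/∂δ_i (δ,V). -/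
/-!
Both injections have the form `V_i · S(a, b)`, where `S(a, b) = flowSum N i a b` is
`Σ_j V_j (a_j sin(δ_i - δ_j) + b_j cos(δ_i - δ_j))`, for the coefficient rows
`(a, b) = (G_i, -B_i)` (reactive) and `(B_i, G_i)` (active). This family is closed under the two
diagonal partial derivatives: `∂/∂δ_i` sends `S(a, b)` to `S(-b, a)` with `a_i` replaced by `0`,
since the `j = i` term does not depend on `δ_i`, and `∂/∂V_i` sends `V_i · S(a, b)` to `S(a, b)`
with `b_i` doubled. Each of the three identities thus reduces to comparing coefficient rows, the
only diagonal contribution to `S(a, b)` being `V_i b_i`.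
-/

open Real Function

noncomputable def flowSum (N : ℕ) (i : Fin N) (a b : Fin N → ℝ) (x : (Fin N → ℝ) × (Fin N → ℝ)) :
    ℝ :=
  ∑ j, x.2 j * (a j * sin (x.1 i - x.1 j) + b j * cos (x.1 i - x.1 j))

section

variable {N : ℕ} (i : Fin N) {F : (Fin N → ℝ) × (Fin N → ℝ) → ℝ}

theorem hasFDerivAt_voltage (x : (Fin N → ℝ) × (Fin N → ℝ)) :
    HasFDerivAt (fun y : (Fin N → ℝ) × (Fin N → ℝ) => y.2 i)
      ((ContinuousLinearMap.proj i).comp (ContinuousLinearMap.snd ℝ _ _)) x := by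
  fun_prop

theorem pdA_voltage_mul (hF : Differentiable ℝ F) :
    pdA N i (fun x => x.2 i * F x) = fun x => x.2 i * pdA N i F x := by
  funext x
  simp only [pdA]
  rw [fderiv_fun_mul (hasFDerivAt_voltage i x).differentiableAt (hF x),
    (hasFDerivAt_voltage i x).fderiv]
  simp

theorem pdM_voltage_mul (hF : Differentiable ℝ F) :
    pdM N i (fun x => x.2 i * F x) = fun x => F x + x.2 i * pdM N i F x := by
  funext x
  simp only [pdM]
  rw [fderiv_fun_mul (hasFDerivAt_voltage i x).differentiableAt (hF x),
    (hasFDerivAt_voltage i x).fderiv]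
  simp only [add_apply, smul_apply, smul_eq_mul, ContinuousLinearMap.comp_apply,
    ContinuousLinearMap.coe_snd', ContinuousLinearMap.proj_apply, Pi.single_eq_same, mul_one]
  ring

end

namespace flowSum

variable {N : ℕ} (i : Fin N) (a b : Fin N → ℝ)

theorem congr_left {a' : Fin N → ℝ} (h : ∀ j ≠ i, a j = a' j) :
    flowSum N i a b = flowSum N i a' b := by
  funext x
  refine Finset.sum_congr rfl fun j _ => ?_
  obtain rfl | hj := eq_or_ne j i
  · simp
  · rw [h j hj]

theorem update_right (t : ℝ) (x : (Fin N → ℝ) × (Fin N → ℝ)) :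
    flowSum N i a (update b i t) x = flowSum N i a b x + x.2 i * (t - b i) := by
  rw [← sub_eq_iff_eq_add', flowSum, flowSum, ← Finset.sum_sub_distrib]
  rw [Finset.sum_eq_single i (fun j _ hj => by simp [update_of_ne hj]) (by simp)]
  simp only [sub_self, sin_zero, mul_zero, update_self, cos_zero, mul_one, zero_add]
  ring

theorem neg_left : flowSum N i (-a) b = -flowSum N i a (-b) := by
  funext x
  simp only [flowSum, Pi.neg_apply, ← Finset.sum_neg_distrib]
  exact Finset.sum_congr rfl fun j _ => by ring

theorem differentiable : Differentiable ℝ (flowSum N i a b) := by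
  unfold flowSum
  fun_prop

theorem fderiv_apply (x v : (Fin N → ℝ) × (Fin N → ℝ)) :
    fderiv ℝ (flowSum N i a b) x v = ∑ j,
      (v.2 j * (a j * sin (x.1 i - x.1 j) + b j * cos (x.1 i - x.1 j)) +
        x.2 j * (a j * cos (x.1 i - x.1 j) - b j * sin (x.1 i - x.1 j)) * (v.1 i - v.1 j)) := by
  have hδ (k : Fin N) : HasFDerivAt (fun y : (Fin N → ℝ) × (Fin N → ℝ) => y.1 k)
      ((ContinuousLinearMap.proj k).comp (ContinuousLinearMap.fst ℝ _ _)) x := by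
    fun_prop
  have h := HasFDerivAt.fun_sum (u := Finset.univ) fun j _ => (hasFDerivAt_voltage j x).fun_mul
    ((((hδ i).fun_sub (hδ j)).sin.const_mul (a j)).fun_add
     (((hδ i).fun_sub (hδ j)).cos.const_mul (b j)))
  unfold flowSum
  rw [h.fderiv]
  simp only [sum_apply, add_apply, smul_apply, sub_apply, ContinuousLinearMap.comp_apply,
    ContinuousLinearMap.coe_fst', ContinuousLinearMap.coe_snd', ContinuousLinearMap.proj_apply,
    smul_eq_mul]
  exact Finset.sum_congr rfl fun j _ => by ring

theorem pdA_eq : pdA N i (flowSum N i a b) = flowSum N i (-b) (update a i 0) := by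
  funext x
  rw [pdA, fderiv_apply]
  refine Finset.sum_congr rfl fun j _ => ?_
  obtain rfl | hj := eq_or_ne j i
  · simp
  · simp only [Pi.single_eq_same, Pi.single_eq_of_ne hj, update_of_ne hj, Pi.zero_apply,
      Pi.neg_apply]
    ring

theorem pdM_eq : pdM N i (flowSum N i a b) = fun _ => b i := by
  funext x
  rw [pdM, fderiv_apply, Finset.sum_eq_single i (fun j _ hj => by simp [hj]) (by simp)]
  simp

theorem pdA_voltage_mul :
    pdA N i (fun x => x.2 i * flowSum N i a b x) =
      fun x => x.2 i * flowSum N i (-b) (update a i 0) x := by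
  rw [_root_.pdA_voltage_mul i (differentiable i a b), pdA_eq]

theorem pdM_voltage_mul :
    pdM N i (fun x => x.2 i * flowSum N i a b x) = flowSum N i a (update b i (2 * b i)) := by
  funext x
  rw [_root_.pdM_voltage_mul i (differentiable i a b), pdM_eq, update_right]
  ring

end flowSum

theorem Qinj_eq_voltage_mul_flowSum (N : ℕ) (G B : Fin N → Fin N → ℝ) (i : Fin N) :
    Qinj N G B i = fun x => x.2 i * flowSum N i (G i) (-B i) x := by
  funext x
  simp only [Qinj, flowSum, Pi.neg_apply, neg_mul, ← sub_eq_add_neg]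

theorem Pinj_eq_voltage_mul_flowSum (N : ℕ) (G B : Fin N → Fin N → ℝ) (i : Fin N) :
    Pinj N G B i = fun x => x.2 i * flowSum N i (B i) (G i) x := by
  funext x
  simp only [Pinj, flowSum, add_comm]

theorem stmt11_general (N : ℕ) (G B : Fin N → Fin N → ℝ)
    (i : Fin N) (δ V : Fin N → ℝ) :
    (V i ^ 2 / 2) * pdM N i (pdM N i (Qinj N G B i)) (δ, V) - Qinj N G B i (δ, V) =
        pdA N i (Pinj N G B i) (δ, V) ∧
    pdA N i (pdA N i (Qinj N G B i)) (δ, V) = pdA N i (Pinj N G B i) (δ, V) ∧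
    V i * pdM N i (pdA N i (Pinj N G B i)) (δ, V) = pdA N i (Pinj N G B i) (δ, V) := by
  simp only [Qinj_eq_voltage_mul_flowSum, Pinj_eq_voltage_mul_flowSum, flowSum.pdA_voltage_mul,
    flowSum.pdM_voltage_mul, flowSum.pdM_eq, neg_neg]
  refine ⟨?_, ?_, ?_⟩
  · rw [flowSum.update_right, flowSum.neg_left]
    simp only [Pi.neg_apply, mul_neg, update_self, zero_sub]
    ring
  · rw [flowSum.congr_left (a' := -G i) i _ _ fun j hj => by simp [hj]]
  · simp

/-- Diagonal second-order partial derivatives of the reactive power: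
`(V_i²/2) ∂²Q_i/∂V_i² − Q_i = ∂²Q_i/∂δ_i² = V_i ∂²P_i/∂V_i∂δ_i = ∂P_i/∂δ_i`. -/
theorem stmt11 (N : ℕ) (hN : 1 ≤ N) (G B : Fin N → Fin N → ℝ)
    (i : Fin N) (δ V : Fin N → ℝ) :
    (V i ^ 2 / 2) * pdM N i (pdM N i (Qinj N G B i)) (δ, V) - Qinj N G B i (δ, V) =
        pdA N i (Pinj N G B i) (δ, V) ∧
    pdA N i (pdA N i (Qinj N G B i)) (δ, V) = pdA N i (Pinj N G B i) (δ, V) ∧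
    V i * pdM N i (pdA N i (Pinj N G B i)) (δ, V) = pdA N i (Pinj N G B i) (δ, V) :=
  stmt11_general N G B i δ V
end
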